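/- arXiv:1502.03505 — 2 statements merged into one kernel-verified Lean document; each statement's English description precedes it below -/
import Mathlib

section
/- (Equality case of the exponential metric increasing property.) If A and B are d × d real symmetric positive definite matrices that commute (AB = BA), i.e. A, B and the identity lie on a common geodesic, then the affine-invariant Riemannian distance equals the LogEuclidean distance: δ_r(A,B) = ‖log A − log B‖_F. -/
open Matrix
open scoped Classical

-- `mexp` is the matrix exponential of a real `d × d` matrix.
noncomputable def mexp {d : ℕ} (A : Matrix (Fin d) (Fin d) ℝ) : Matrix (Fin d) (Fin d) ℝ :=
  NormedSpace.exp A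

-- `mlog A` is the principal matrix logarithm: the unique symmetric matrix whose
-- matrix exponential is `A`, when `A` is symmetric positive definite.
noncomputable def mlog {d : ℕ} (A : Matrix (Fin d) (Fin d) ℝ) : Matrix (Fin d) (Fin d) ℝ :=
  if h : ∃ S : Matrix (Fin d) (Fin d) ℝ, S.IsSymm ∧ mexp S = A then h.choose else 0

-- `A^{1/2} = exp((1/2) log A)`.
noncomputable def msqrt {d : ℕ} (A : Matrix (Fin d) (Fin d) ℝ) : Matrix (Fin d) (Fin d) ℝ :=
  mexp ((1/2 : ℝ) • mlog A)

-- `A^{-1/2} = exp(-(1/2) log A)`.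
noncomputable def minvsqrt {d : ℕ} (A : Matrix (Fin d) (Fin d) ℝ) : Matrix (Fin d) (Fin d) ℝ :=
  mexp (-(1/2 : ℝ) • mlog A)

-- Frobenius norm.
noncomputable def frob {d : ℕ} (A : Matrix (Fin d) (Fin d) ℝ) : ℝ :=
  Real.sqrt ((Aᵀ * A).trace)

-- Affine-invariant Riemannian (AIRM) distance `δ_r(A,B) = ‖log(A^{-1/2} B A^{-1/2})‖_F`.
noncomputable def airm {d : ℕ} (A B : Matrix (Fin d) (Fin d) ℝ) : ℝ :=
  frob (mlog (minvsqrt A * B * minvsqrt A))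

-- Affine-invariant inner product at `G`: `⟨S,S'⟩_G = tr(G⁻¹ S G⁻¹ S')`.
noncomputable def innG {d : ℕ} (G S S' : Matrix (Fin d) (Fin d) ℝ) : ℝ :=
  (G⁻¹ * S * G⁻¹ * S').trace

-- Norm induced by the affine-invariant inner product at `G`.
noncomputable def normG {d : ℕ} (G S : Matrix (Fin d) (Fin d) ℝ) : ℝ :=
  Real.sqrt (innG G S S)

-- Logarithmic map at `G`: `log_G(A) = G^{1/2} log(G^{-1/2} A G^{-1/2}) G^{1/2}`.
noncomputable def logMap {d : ℕ} (G A : Matrix (Fin d) (Fin d) ℝ) : Matrix (Fin d) (Fin d) ℝ :=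
  msqrt G * mlog (minvsqrt G * A * minvsqrt G) * msqrt G

-- Exponential map at `G`: `exp_G(S) = G^{1/2} exp(G^{-1/2} S G^{-1/2}) G^{1/2}`.
noncomputable def expMap {d : ℕ} (G S : Matrix (Fin d) (Fin d) ℝ) : Matrix (Fin d) (Fin d) ℝ :=
  msqrt G * mexp (minvsqrt G * S * minvsqrt G) * msqrt G

-- Symmetric part `sym(M) = (M + Mᵀ)/2`.
noncomputable def symPart {d : ℕ} (M : Matrix (Fin d) (Fin d) ℝ) : Matrix (Fin d) (Fin d) ℝ :=
  (1/2 : ℝ) • (M + Mᵀ)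

/-!
On positive definite matrices the symmetric logarithm `mlog` is the logarithm of the continuous
functional calculus, because `CFC.log ∘ exp` is the identity on symmetric matrices. Hence
`log A` and `log B` are functions of the commuting matrices `A` and `B` and commute, so
`A^{-1/2} B A^{-1/2} = exp (log B - log A)`, whose symmetric logarithm is `log B - log A`.
-/

-- `CFC.log` needs a normed algebra; the L2 operator norm is the one whose topology is reducibly
-- the product topology in which `mexp` is defined.
open scoped MatrixOrder Matrix.Norms.L2Operator

variable {d : ℕ} {A B S T : Matrix (Fin d) (Fin d) ℝ}

theorem mlog_mexp (hS : S.IsSymm) : mlog (mexp S) = S := by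
  have hex : ∃ S' : Matrix (Fin d) (Fin d) ℝ, S'.IsSymm ∧ mexp S' = mexp S := ⟨S, hS, rfl⟩
  obtain ⟨hchoose_symm, hchoose_exp⟩ := hex.choose_spec
  rw [mlog, dif_pos hex]
  calc hex.choose = CFC.log (mexp hex.choose) := (CFC.log_exp _ hchoose_symm).symm
    _ = CFC.log (mexp S) := by rw [hchoose_exp]
    _ = S := CFC.log_exp S hS

theorem Matrix.PosDef.mlog_eq_log (hA : A.PosDef) : mlog A = CFC.log A := by
  conv_lhs => rw [← CFC.exp_log A hA.isStrictlyPositive]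
  exact mlog_mexp IsSelfAdjoint.log

theorem Matrix.PosDef.isSymm_mlog (hA : A.PosDef) : (mlog A).IsSymm := by
  rw [hA.mlog_eq_log]
  exact IsSelfAdjoint.log

theorem Matrix.PosDef.mexp_mlog (hA : A.PosDef) : mexp (mlog A) = A := by
  rw [hA.mlog_eq_log]
  exact CFC.exp_log A hA.isStrictlyPositive

theorem commute_mlog (hA : A.PosDef) (hB : B.PosDef) (h : Commute A B) :
    Commute (mlog A) (mlog B) := by
  rw [hA.mlog_eq_log, hB.mlog_eq_log]
  exact ((h.cfc_real _).symm.cfc_real _).symm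

theorem minvsqrt_mul_mexp_mul_minvsqrt (h : Commute (mlog A) T) :
    minvsqrt A * mexp T * minvsqrt A = mexp (T - mlog A) := by
  have hhalf : Commute (-(1 / 2 : ℝ) • mlog A) T := h.smul_left _
  rw [minvsqrt, mexp, mexp, mexp, mul_assoc, ← hhalf.exp_left.exp_right.eq, ← mul_assoc,
    ← Matrix.exp_add_of_commute _ _ (Commute.refl _),
    ← Matrix.exp_add_of_commute (_ + _) T (hhalf.add_left hhalf)]
  congr 1
  module

theorem frob_sub_rev (S T : Matrix (Fin d) (Fin d) ℝ) : frob (S - T) = frob (T - S) := by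
  rw [frob, frob, ← neg_sub T S, transpose_neg, neg_mul_neg]

/-- Equality case of the exponential metric increasing property: if `A` and `B`
commute then `δ_r(A,B) = ‖log A − log B‖_F`. -/
theorem stmt2 (d : ℕ) (A B : Matrix (Fin d) (Fin d) ℝ)
    (hA : A.PosDef) (hB : B.PosDef) (hcomm : A * B = B * A) :
    airm A B = frob (mlog A - mlog B) := by
  calc airm A B = frob (mlog (minvsqrt A * mexp (mlog B) * minvsqrt A)) := by
        rw [airm, hB.mexp_mlog]
    _ = frob (mlog B - mlog A) := by
        rw [minvsqrt_mul_mexp_mul_minvsqrt (commute_mlog hA hB hcomm),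
          mlog_mexp (hB.isSymm_mlog.sub hA.isSymm_mlog)]
    _ = frob (mlog A - mlog B) := frob_sub_rev _ _
end

section
/- (Positive semidefiniteness of the LogEuclidean kernel Gram matrix.) For every d × d real symmetric positive definite matrix G and every finite family X_1, …, X_n of d × d real symmetric positive definite matrices, the n × n Gram matrix H with entries H_{ij} = k_G(X_i, X_j) = tr( log(G^{-1/2} X_i G^{-1/2}) · log(G^{-1/2} X_j G^{-1/2}) ) is symmetric positive semidefinite. -/
open Matrix
open scoped Classical

/-! Writing `L i = log(G^{-1/2} X_i G^{-1/2})`, which is symmetric, the kernel matrix has entries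
`tr(L i * L j) = tr((L i)ᵀ * L j) = ∑ₖₗ (L i)ₖₗ (L j)ₖₗ`, so it is `Bᵀ * B` for the matrix `B` whose
`i`-th column is `L i` flattened into a vector. -/

theorem Matrix.posSemidef_of_trace_conjTranspose_mul {ι m k R : Type*} [Fintype ι] [Fintype m]
    [Fintype k] [CommRing R] [PartialOrder R] [StarRing R] [StarOrderedRing R]
    (L : ι → Matrix m k R) :
    PosSemidef (of fun i j => ((L i)ᴴ * L j).trace) := by
  let B : Matrix (m × k) ι R := of fun p i => L i p.1 p.2
  have hgram : of (fun i j => ((L i)ᴴ * L j).trace) = Bᴴ * B := by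
    ext i j
    simp only [B, of_apply, trace, diag_apply, mul_apply, conjTranspose_apply,
      Fintype.sum_prod_type]
    exact Finset.sum_comm
  exact hgram ▸ posSemidef_conjTranspose_mul_self B

theorem mlog_isSymm {d : ℕ} (A : Matrix (Fin d) (Fin d) ℝ) : (mlog A).IsSymm := by
  unfold mlog
  split_ifs with h
  · exact h.choose_spec.1
  · exact isSymm_zero

theorem stmt11_general (d n : ℕ) (G : Matrix (Fin d) (Fin d) ℝ)
    (X : Fin n → Matrix (Fin d) (Fin d) ℝ) :
    Matrix.PosSemidef (Matrix.of fun i j : Fin n =>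
      (mlog (minvsqrt G * X i * minvsqrt G) * mlog (minvsqrt G * X j * minvsqrt G)).trace) := by
  simpa only [conjTranspose_eq_transpose_of_trivial, (mlog_isSymm _).eq] using
    posSemidef_of_trace_conjTranspose_mul fun i => mlog (minvsqrt G * X i * minvsqrt G)

/-- The Gram matrix of the LogEuclidean kernel `k_G` is symmetric positive
semidefinite. -/
theorem stmt11 (d n : ℕ) (G : Matrix (Fin d) (Fin d) ℝ) (hG : G.PosDef)
    (X : Fin n → Matrix (Fin d) (Fin d) ℝ) (hX : ∀ i, (X i).PosDef) :
    Matrix.PosSemidef (Matrix.of fun i j : Fin n =>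
      (mlog (minvsqrt G * X i * minvsqrt G) * mlog (minvsqrt G * X j * minvsqrt G)).trace) :=
  stmt11_general d n G X
end
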